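/- Let n ≥ 2, s ∈ (0,1), r > 0, and let ψ : B'_r → ℝ be a Lipschitz function, where B'_r ⊂ ℝ^{n−1} is the open ball of radius r centered at 0. For ε > 0 define A^ε = {(x', x_n) ∈ B'_r × ℝ : ψ(x') < x_n < ψ(x') + ε} and B^ε = {(x', x_n) ∈ B'_r × ℝ : ψ(x') − ε < x_n < ψ(x')}. Then there exists a constant C > 0, depending only on n, s, r and the Lipschitz constant of ψ, such that for every ε ∈ (0, 1/2), L^s(A^ε, B^ε) ≥ C ε^{1−s}. -/

import Mathlib

open MeasureTheory Filter ENNReal NNReal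

/-- The nonlocal interaction `L^s(A,B) = ∫_A ∫_B |x-y|^{-(n+s)} dy dx ∈ [0,∞]`. -/
noncomputable def Ls (n : ℕ) (s : ℝ) (A B : Set (EuclideanSpace ℝ (Fin n))) : ℝ≥0∞ :=
  ∫⁻ x in A, ∫⁻ y in B, ENNReal.ofReal (1 / ‖x - y‖ ^ ((n : ℝ) + s))

/-- Projection `x ↦ x'` of `x = (x', x_n) ∈ ℝ^{n-1} × ℝ` onto the first coordinates. -/
noncomputable def projE (m : ℕ) (x : EuclideanSpace ℝ (Fin (m + 1))) :
    EuclideanSpace ℝ (Fin m) :=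
  WithLp.toLp 2 (fun i : Fin m => x i.castSucc)

/-!
Replace `ψ` by a global `Lψ`-Lipschitz extension `g`. For `x` in the upper strip with
`|x'| < r/2` and `ρ = c ε` (`c` small in terms of `r` and `Lψ`), the Lipschitz bound puts the
cylinder `|y' - x'| < ρ`, `g x' - ε + Lψ ρ < y_n < g x' - Lψ ρ` inside the lower strip; it has
volume `≍ ρ^m ε` and lies within distance `3ε` of `x`, so the inner integral is
`≳ ε^{-(m+1+s)} ε^{m+1} = ε^{-s}`. Integrating over a part of the upper strip of volume `≍ ε`
gives `ε^{1-s}`.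
-/

open Metric Set

section Splitting

variable {m : ℕ}

lemma projE_sub (x y : EuclideanSpace ℝ (Fin (m + 1))) :
    projE m (x - y) = projE m x - projE m y := rfl

lemma norm_sq_eq_norm_projE_sq_add_sq (x : EuclideanSpace ℝ (Fin (m + 1))) :
    ‖x‖ ^ 2 = ‖projE m x‖ ^ 2 + x (Fin.last m) ^ 2 := by
  simp only [EuclideanSpace.norm_sq_eq, Fin.sum_univ_castSucc, projE, Real.norm_eq_abs, sq_abs]

lemma norm_le_norm_projE_add_abs (x : EuclideanSpace ℝ (Fin (m + 1))) :
    ‖x‖ ≤ ‖projE m x‖ + |x (Fin.last m)| := by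
  refine le_of_sq_le_sq ?_ (by positivity)
  rw [norm_sq_eq_norm_projE_sq_add_sq, add_sq, sq_abs]
  nlinarith [norm_nonneg (projE m x), abs_nonneg (x (Fin.last m))]

lemma abs_last_le_norm (x : EuclideanSpace ℝ (Fin (m + 1))) : |x (Fin.last m)| ≤ ‖x‖ := by
  simpa only [Real.norm_eq_abs] using PiLp.norm_apply_le x (Fin.last m)

variable (m) in
def splitLast : EuclideanSpace ℝ (Fin (m + 1)) ≃ᵐ EuclideanSpace ℝ (Fin m) × ℝ :=
  ((MeasurableEquiv.toLp 2 _).symm.trans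
    ((MeasurableEquiv.piFinSuccAbove (fun _ => ℝ) (Fin.last m)).trans
      MeasurableEquiv.prodComm)).trans
    (MeasurableEquiv.prodCongr (MeasurableEquiv.toLp 2 _) (MeasurableEquiv.refl ℝ))

lemma splitLast_apply (x : EuclideanSpace ℝ (Fin (m + 1))) :
    splitLast m x = (projE m x, x (Fin.last m)) := by
  simp only [splitLast, MeasurableEquiv.piFinSuccAbove, Fin.insertNthEquiv_last,
    MeasurableEquiv.trans_apply, MeasurableEquiv.toLp_symm_apply, MeasurableEquiv.coe_mk,
    Fin.snocEquiv_symm_apply, projE]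
  rfl

lemma measurePreserving_splitLast :
    MeasurePreserving (splitLast m) volume (volume.prod volume) :=
  ((EuclideanSpace.volume_preserving_symm_measurableEquiv_toLp _).trans
    ((volume_preserving_piFinSuccAbove (fun _ => ℝ) (Fin.last m)).trans
      Measure.measurePreserving_swap)).trans
    ((PiLp.volume_preserving_toLp _).prod (MeasurePreserving.id volume))

end Splitting

section GraphRegion

variable {m : ℕ} {U V : Set (EuclideanSpace ℝ (Fin m))}
  {f f' g g' : EuclideanSpace ℝ (Fin m) → ℝ}

variable (U f g) in
def graphRegion : Set (EuclideanSpace ℝ (Fin (m + 1))) :=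
  splitLast m ⁻¹' regionBetween f g U

lemma mem_graphRegion {x : EuclideanSpace ℝ (Fin (m + 1))} :
    x ∈ graphRegion U f g ↔
      projE m x ∈ U ∧ f (projE m x) < x (Fin.last m) ∧ x (Fin.last m) < g (projE m x) := by
  simp only [graphRegion, mem_preimage, regionBetween, splitLast_apply, mem_ofPred_eq, mem_Ioo]

lemma graphRegion_mono (hUV : U ⊆ V) (hf : ∀ z ∈ U, f' z ≤ f z)
    (hg : ∀ z ∈ U, g z ≤ g' z) :
    graphRegion U f g ⊆ graphRegion V f' g' := by
  intro x hx
  obtain ⟨hxU, hfx, hxg⟩ := mem_graphRegion.1 hx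
  exact mem_graphRegion.2 ⟨hUV hxU, (hf _ hxU).trans_lt hfx, hxg.trans_le (hg _ hxU)⟩

lemma graphRegion_congr (hf : EqOn f f' U) (hg : EqOn g g' U) :
    graphRegion U f g = graphRegion U f' g' :=
  (graphRegion_mono subset_rfl (fun _ hz => (hf hz).ge) (fun _ hz => (hg hz).le)).antisymm
    (graphRegion_mono subset_rfl (fun _ hz => (hf hz).le) (fun _ hz => (hg hz).ge))

lemma measurableSet_graphRegion (hf : Measurable f) (hg : Measurable g)
    (hU : MeasurableSet U) :
    MeasurableSet (graphRegion U f g) :=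
  (splitLast m).measurable (measurableSet_regionBetween hf hg hU)

lemma volume_graphRegion_add (hf : Measurable f) (hU : MeasurableSet U) (δ : ℝ) :
    volume (graphRegion U f (fun z => f z + δ)) = volume U * ENNReal.ofReal δ := by
  have hg : Measurable fun z => f z + δ := hf.add_const δ
  rw [graphRegion, measurePreserving_splitLast.measure_preimage
      (measurableSet_regionBetween hf hg hU).nullMeasurableSet,
    volume_regionBetween_eq_lintegral' hf hg hU]
  simp only [Pi.sub_apply, add_sub_cancel_left, setLIntegral_const, mul_comm]

end GraphRegion

lemma ofReal_mul_measure_le_setLIntegral_inv_norm_rpow {E : Type*} [NormedAddCommGroup E]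
    [MeasurableSpace E] (μ : Measure E) {S B : Set E} (hS : MeasurableSet S) (hSB : S ⊆ B)
    {x : E} {D p : ℝ} (hp : 0 ≤ p) (hD : ∀ y ∈ S, 0 < ‖x - y‖ ∧ ‖x - y‖ ≤ D) :
    ENNReal.ofReal (1 / D ^ p) * μ S ≤ ∫⁻ y in B, ENNReal.ofReal (1 / ‖x - y‖ ^ p) ∂μ :=
  calc ENNReal.ofReal (1 / D ^ p) * μ S = ∫⁻ _ in S, ENNReal.ofReal (1 / D ^ p) ∂μ :=
        (setLIntegral_const S _).symm
    _ ≤ ∫⁻ y in S, ENNReal.ofReal (1 / ‖x - y‖ ^ p) ∂μ := by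
        refine setLIntegral_mono' hS fun y hy => ENNReal.ofReal_le_ofReal ?_
        obtain ⟨hpos, hle⟩ := hD y hy
        exact one_div_le_one_div_of_le (by positivity) (Real.rpow_le_rpow hpos.le hle hp)
    _ ≤ ∫⁻ y in B, ENNReal.ofReal (1 / ‖x - y‖ ^ p) ∂μ := lintegral_mono_set hSB

lemma mul_volume_le_Ls {n : ℕ} {s : ℝ} {A A' B : Set (EuclideanSpace ℝ (Fin n))}
    (hA' : MeasurableSet A') (hA'A : A' ⊆ A) {c : ℝ≥0∞}
    (hc : ∀ x ∈ A', c ≤ ∫⁻ y in B, ENNReal.ofReal (1 / ‖x - y‖ ^ ((n : ℝ) + s))) :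
    c * volume A' ≤ Ls n s A B :=
  calc c * volume A' = ∫⁻ _ in A', c := (setLIntegral_const A' c).symm
    _ ≤ ∫⁻ x in A', ∫⁻ y in B, ENNReal.ofReal (1 / ‖x - y‖ ^ ((n : ℝ) + s)) :=
        setLIntegral_mono' hA' hc
    _ ≤ Ls n s A B := lintegral_mono_set hA'A

section Lipschitz

variable {m : ℕ} {g : EuclideanSpace ℝ (Fin m) → ℝ} {K : ℝ≥0}

lemma graphRegion_ball_subset_strip_below (hg : LipschitzWith K g)
    {z : EuclideanSpace ℝ (Fin m)} {r ρ ε : ℝ} (hzρ : ball z ρ ⊆ ball 0 r) :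
    graphRegion (ball z ρ) (fun _ => g z - ε + K * ρ) (fun _ => g z - K * ρ) ⊆
      graphRegion (ball 0 r) (fun w => g w - ε) g := by
  have hclose : ∀ w ∈ ball z ρ, |g w - g z| ≤ K * ρ := fun w hw => by
    rw [← Real.dist_eq]
    exact (hg.dist_le_mul w z).trans (mul_le_mul_of_nonneg_left (mem_ball.1 hw).le K.2)
  refine graphRegion_mono hzρ (fun w hw => ?_) (fun w hw => ?_) <;>
    linarith [(abs_le.1 (hclose w hw)).1, (abs_le.1 (hclose w hw)).2]

lemma le_setLIntegral_inv_norm_rpow_strip_below (hg : LipschitzWith K g) {r ε ρ p : ℝ}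
    (hρ : 0 < ρ) (hρr : ρ ≤ r / 2) (hρε : ρ ≤ ε) (hKρ : K * ρ ≤ ε / 4) (hp : 0 ≤ p)
    {x : EuclideanSpace ℝ (Fin (m + 1))}
    (hx : x ∈ graphRegion (ball 0 (r / 2)) g (fun z => g z + ε)) :
    ENNReal.ofReal (1 / (3 * ε) ^ p) *
        (volume (ball (0 : EuclideanSpace ℝ (Fin m)) ρ) * ENNReal.ofReal (ε / 2)) ≤
      ∫⁻ y in graphRegion (ball 0 r) (fun z => g z - ε) g, ENNReal.ofReal (1 / ‖x - y‖ ^ p) := by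
  obtain ⟨hxU, hgx, hxg⟩ := mem_graphRegion.1 hx
  set z := projE m x
  set C := graphRegion (ball z ρ) (fun _ => g z - ε + K * ρ) (fun _ => g z - K * ρ)
  have hKρ₀ : 0 ≤ (K : ℝ) * ρ := by positivity
  have hC_vol : volume (ball (0 : EuclideanSpace ℝ (Fin m)) ρ) * ENNReal.ofReal (ε / 2) ≤
      volume C := by
    have hC : C = graphRegion (ball z ρ) (fun _ => g z - ε + K * ρ)
        (fun _ => (g z - ε + K * ρ) + (ε - 2 * (K * ρ))) :=
      graphRegion_congr (fun _ _ => rfl) (fun _ _ => by ring)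
    rw [hC, volume_graphRegion_add measurable_const measurableSet_ball,
      Measure.addHaar_ball_center volume z]
    gcongr
    linarith
  have hC_sub : C ⊆ graphRegion (ball 0 r) (fun w => g w - ε) g :=
    graphRegion_ball_subset_strip_below hg
      (ball_subset_ball' (by linarith [mem_ball.1 hxU]))
  have hC_near : ∀ y ∈ C, 0 < ‖x - y‖ ∧ ‖x - y‖ ≤ 3 * ε := by
    intro y hy
    obtain ⟨hyz, hy₁, hy₂⟩ := mem_graphRegion.1 hy
    have hgap : 0 < (x - y) (Fin.last m) := by
      rw [PiLp.sub_apply]; linarith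
    have hproj : ‖projE m (x - y)‖ ≤ ε := by
      rw [projE_sub, ← dist_eq_norm, dist_comm]
      exact (mem_ball.1 hyz).le.trans hρε
    refine ⟨(abs_pos_of_pos hgap).trans_le (abs_last_le_norm _), ?_⟩
    calc ‖x - y‖ ≤ ‖projE m (x - y)‖ + |(x - y) (Fin.last m)| :=
          norm_le_norm_projE_add_abs _
      _ ≤ 3 * ε := by
        rw [abs_of_pos hgap, PiLp.sub_apply]
        linarith
  calc _ ≤ ENNReal.ofReal (1 / (3 * ε) ^ p) * volume C := by gcongr
    _ ≤ _ := ofReal_mul_measure_le_setLIntegral_inv_norm_rpow volume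
        (measurableSet_graphRegion measurable_const measurable_const measurableSet_ball)
        hC_sub hp hC_near

end Lipschitz

lemma exists_pos_le_le_mul_le (r : ℝ) (hr : 0 < r) (K : ℝ≥0) :
    ∃ c : ℝ, 0 < c ∧ c ≤ r ∧ c ≤ 1 / 4 ∧ K * c ≤ 1 / 4 := by
  set a := min r (1 / 4)
  have ha : 0 < a := lt_min hr (by norm_num)
  have hK : (1 : ℝ) ≤ K + 1 := le_add_of_nonneg_left K.2
  refine ⟨a / (K + 1), by positivity, (div_le_self ha.le hK).trans (min_le_left _ _),
    (div_le_self ha.le hK).trans (min_le_right _ _), ?_⟩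
  calc (K : ℝ) * (a / (K + 1)) ≤ (K + 1) * (a / (K + 1)) := by gcongr; linarith
    _ = a := mul_div_cancel₀ _ (by positivity)
    _ ≤ 1 / 4 := min_le_right _ _

lemma one_div_three_mul_rpow_mul_eq (m : ℕ) {s ε c R ω : ℝ} (hε : 0 < ε) :
    1 / (3 * ε) ^ ((m + 1 : ℕ) + s) * ((c * ε) ^ m * ω * (ε / 2)) * (R ^ m * ω * ε) =
      c ^ m * R ^ m * ω ^ 2 / (2 * 3 ^ ((m + 1 : ℕ) + s)) * ε ^ (1 - s) := by
  rw [Real.mul_rpow (by norm_num) hε.le, Real.rpow_add hε, Real.rpow_natCast, Real.rpow_sub hε,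
    Real.rpow_one]
  have : 0 < ε ^ s := Real.rpow_pos_of_pos hε s
  have : (0 : ℝ) < 3 ^ ((m + 1 : ℕ) + s) := by positivity
  field_simp
  ring

theorem strip_interaction_lower_bound_general
    (m : ℕ) (s : ℝ) (hs : s ∈ Set.Ioo (0 : ℝ) 1) (r : ℝ) (hr : 0 < r)
    (ψ : EuclideanSpace ℝ (Fin m) → ℝ)
    (Lψ : ℝ≥0) (hLip : LipschitzOnWith Lψ ψ (Metric.ball (0 : EuclideanSpace ℝ (Fin m)) r)) :
    ∃ C : ℝ, 0 < C ∧ ∀ ε ∈ Set.Ioo (0 : ℝ) (1 / 2),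
      ENNReal.ofReal (C * ε ^ (1 - s)) ≤
        Ls (m + 1) s
          {x : EuclideanSpace ℝ (Fin (m + 1)) |
            projE m x ∈ Metric.ball (0 : EuclideanSpace ℝ (Fin m)) r ∧
            ψ (projE m x) < x (Fin.last m) ∧ x (Fin.last m) < ψ (projE m x) + ε}
          {x : EuclideanSpace ℝ (Fin (m + 1)) |
            projE m x ∈ Metric.ball (0 : EuclideanSpace ℝ (Fin m)) r ∧
            ψ (projE m x) - ε < x (Fin.last m) ∧ x (Fin.last m) < ψ (projE m x)} := by
  obtain ⟨g, hg, hψg⟩ := hLip.extend_real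
  have hgm : Measurable g := hg.continuous.measurable
  obtain ⟨c, hc, hcr, hc4, hKc⟩ := exists_pos_le_le_mul_le r hr Lψ
  set ω := volume (ball (0 : EuclideanSpace ℝ (Fin m)) 1)
  have hω : 0 < ω.toReal :=
    ENNReal.toReal_pos (measure_ball_pos _ _ one_pos).ne' measure_ball_lt_top.ne
  refine ⟨c ^ m * (r / 2) ^ m * ω.toReal ^ 2 / (2 * 3 ^ ((m + 1 : ℕ) + s)), by positivity,
    fun ε ⟨hε, hε2⟩ => ?_⟩
  have hA : graphRegion (ball 0 (r / 2)) g (fun z => g z + ε) ⊆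
      graphRegion (ball 0 r) ψ (fun z => ψ z + ε) := by
    rw [graphRegion_congr hψg (fun z hz => congrArg (· + ε) (hψg hz))]
    exact graphRegion_mono (ball_subset_ball (by linarith)) (fun _ _ => le_rfl)
      (fun _ _ => le_rfl)
  have hB : graphRegion (ball 0 r) (fun z => ψ z - ε) ψ =
      graphRegion (ball 0 r) (fun z => g z - ε) g :=
    graphRegion_congr (fun z hz => congrArg (· - ε) (hψg hz)) hψg
  have key := mul_volume_le_Ls (s := s)
    (measurableSet_graphRegion hgm (hgm.add_const ε) measurableSet_ball) hA fun x hx =>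
      hB ▸ le_setLIntegral_inv_norm_rpow_strip_below hg (mul_pos hc hε) (by nlinarith)
        (by nlinarith) (by nlinarith) (by linarith [hs.1]) hx
  rw [volume_graphRegion_add hgm measurableSet_ball,
    Measure.addHaar_ball_of_pos _ _ (mul_pos hc hε), Measure.addHaar_ball_of_pos _ _ (half_pos hr),
    finrank_euclideanSpace_fin, ← ENNReal.ofReal_toReal measure_ball_lt_top.ne] at key
  convert key using 1
  · rw [← one_div_three_mul_rpow_mul_eq m hε]
    repeat rw [ENNReal.ofReal_mul (by positivity)]
  · congr 1 <;> ext x <;> rw [mem_graphRegion] <;> rfl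

/-- Lower bound `L^s(A^ε, B^ε) ≥ C ε^{1-s}` for the interaction between the two `ε`-strips
above and below a Lipschitz graph over `B'_r` (here `n = m+1 ≥ 2`). -/
theorem strip_interaction_lower_bound
    (m : ℕ) (hm : 1 ≤ m) (s : ℝ) (hs : s ∈ Set.Ioo (0 : ℝ) 1) (r : ℝ) (hr : 0 < r)
    (ψ : EuclideanSpace ℝ (Fin m) → ℝ)
    (Lψ : ℝ≥0) (hLip : LipschitzOnWith Lψ ψ (Metric.ball (0 : EuclideanSpace ℝ (Fin m)) r)) :
    ∃ C : ℝ, 0 < C ∧ ∀ ε ∈ Set.Ioo (0 : ℝ) (1 / 2),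
      ENNReal.ofReal (C * ε ^ (1 - s)) ≤
        Ls (m + 1) s
          {x : EuclideanSpace ℝ (Fin (m + 1)) |
            projE m x ∈ Metric.ball (0 : EuclideanSpace ℝ (Fin m)) r ∧
            ψ (projE m x) < x (Fin.last m) ∧ x (Fin.last m) < ψ (projE m x) + ε}
          {x : EuclideanSpace ℝ (Fin (m + 1)) |
            projE m x ∈ Metric.ball (0 : EuclideanSpace ℝ (Fin m)) r ∧
            ψ (projE m x) - ε < x (Fin.last m) ∧ x (Fin.last m) < ψ (projE m x)} :=
  strip_interaction_lower_bound_general m s hs r hr ψ Lψ hLip
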